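/- arXiv:2105.14559 — 2 statements merged into one kernel-verified Lean document; each statement's English description precedes it below -/
import Mathlib

section
/- Let C ≥ 1 and α_i, β_i > 0 for i = 1,…,C, and for each i let f_i = f_{α_i,β_i} be the Beta(α_i,β_i) density with mean m_i = α_i/(α_i+β_i). Then the marginalized joint entropy satisfies −∑_{i=1}^{C} ∫₀¹ p·f_i(p)·log(p·f_i(p)) dp = ∑_{i=1}^{C} (α_i/(α_i+β_i)) · [ log B(α_i+1,β_i) − α_i·ψ(α_i+1) − (β_i−1)·ψ(β_i) + (α_i+β_i−1)·ψ(α_i+β_i+1) − log(α_i/(α_i+β_i)) ], where ψ is the digamma function and B(α,β) = Γ(α)Γ(β)/Γ(α+β). -/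
open Real MeasureTheory

/-- The Beta function `B(α,β) = Γ(α)Γ(β)/Γ(α+β)`. -/
noncomputable def betaB (α β : ℝ) : ℝ := Gamma α * Gamma β / Gamma (α + β)

/-- The density of the `Beta(α,β)` distribution on `[0,1]`. -/
noncomputable def betaDensity (α β : ℝ) (p : ℝ) : ℝ :=
  p ^ (α - 1) * (1 - p) ^ (β - 1) / betaB α β

/-- The digamma function `ψ`, the derivative of `log Γ`. -/
noncomputable def digamma (x : ℝ) : ℝ := deriv (fun y : ℝ => Real.log (Gamma y)) x

/-! Since `p f(p) = p^α (1-p)^(β-1) / B(α,β)`, the integrand `p f log (p f)` is a combination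
of `p^α (1-p)^(β-1)` and of its products with `log p` and `log (1-p)`; the first integrates to
`B(α+1,β)`. Differentiating `∫₀¹ p^(a-1) (1-p)^(b-1) dp = B(a,b)` in `a` under the integral
sign (dominated through `|log p| ≤ p^(-δ)/δ`) gives
`∫₀¹ p^(a-1) (1-p)^(b-1) log p dp = B(a,b) (ψ(a) - ψ(a+b))`, and `p ↦ 1 - p` gives the
`log (1-p)` moment. The recurrence `B(α+1,β) = α/(α+β) · B(α,β)` then rewrites `log B(α,β)`
and the prefactor `B(α+1,β)/B(α,β)` in terms of the mean. -/

open Set Filter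

lemma hasDerivAt_Gamma_digamma_mul {x : ℝ} (hx : ∀ m : ℕ, x ≠ -m) :
    HasDerivAt Gamma (digamma x * Gamma x) x := by
  have hd := Real.differentiableAt_Gamma hx
  have hG := Real.Gamma_ne_zero hx
  rw [digamma, deriv.log hd hG, div_mul_cancel₀ _ hG]
  exact hd.hasDerivAt

lemma betaB_comm (a b : ℝ) : betaB a b = betaB b a := by
  rw [betaB, betaB, mul_comm, add_comm]

lemma betaB_add_one_left {a b : ℝ} (ha : a ≠ 0) (hab : a + b ≠ 0) :
    betaB (a + 1) b = a / (a + b) * betaB a b := by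
  rw [betaB, betaB, Real.Gamma_add_one ha, add_right_comm, Real.Gamma_add_one hab]
  field_simp

lemma hasDerivAt_betaB_left {a b : ℝ} (ha : ∀ m : ℕ, a ≠ -m) (hab : ∀ m : ℕ, a + b ≠ -m) :
    HasDerivAt (fun s => betaB s b) (betaB a b * (digamma a - digamma (a + b))) a := by
  have hnum := (hasDerivAt_Gamma_digamma_mul ha).mul_const (Gamma b)
  have hden := (hasDerivAt_Gamma_digamma_mul hab).comp_add_const a b
  refine (hnum.div hden (Real.Gamma_ne_zero hab)).congr_deriv ?_
  rw [betaB]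
  field_simp

lemma ofReal_beta_integrand {a b p : ℝ} (hp : p ∈ Icc (0 : ℝ) 1) :
    ((p ^ (a - 1) * (1 - p) ^ (b - 1) : ℝ) : ℂ)
      = (p : ℂ) ^ ((a : ℂ) - 1) * (1 - (p : ℂ)) ^ ((b : ℂ) - 1) := by
  rw [Complex.ofReal_mul, Complex.ofReal_cpow hp.1, Complex.ofReal_cpow (sub_nonneg.2 hp.2)]
  push_cast
  rfl

lemma norm_rpow_mul_log_le {p s δ : ℝ} (hp0 : 0 < p) (hp1 : p ≤ 1) (hδ : 0 < δ) :
    ‖p ^ s * log p‖ ≤ δ⁻¹ * p ^ (s - δ) := by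
  have h := abs_log_mul_self_rpow_lt p δ hp0 hp1 hδ
  calc ‖p ^ s * log p‖ = |log p * p ^ δ| * p ^ (s - δ) := by
        rw [Real.norm_eq_abs, abs_mul, abs_mul, abs_of_pos (rpow_pos_of_pos hp0 _),
          abs_of_pos (rpow_pos_of_pos hp0 _), mul_assoc, ← rpow_add hp0]
        ring_nf
    _ ≤ δ⁻¹ * p ^ (s - δ) := by
        rw [← one_div]
        exact mul_le_mul_of_nonneg_right h.le (rpow_nonneg hp0.le _)

lemma betaIntegral_ofReal (a b : ℝ) :
    Complex.betaIntegral a b = ∫ p in (0 : ℝ)..1, ((p ^ (a - 1) * (1 - p) ^ (b - 1) : ℝ) : ℂ) :=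
  intervalIntegral.integral_congr fun p hp ↦ (ofReal_beta_integrand (by simpa using hp)).symm

section BetaIntegral

variable {a b : ℝ}

lemma intervalIntegrable_beta_integrand (ha : 0 < a) (hb : 0 < b) :
    IntervalIntegrable (fun p ↦ p ^ (a - 1) * (1 - p) ^ (b - 1)) volume 0 1 := by
  have h := (Complex.betaIntegral_convergent (u := a) (v := b) (by simpa) (by simpa)).congr
    (g := fun p ↦ ((p ^ (a - 1) * (1 - p) ^ (b - 1) : ℝ) : ℂ)) ?_
  · exact ⟨by simpa [IntegrableOn] using h.1.re, by simp⟩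
  · intro p hp
    exact (ofReal_beta_integrand (by simpa using Ioc_subset_Icc_self hp)).symm

lemma integral_beta_integrand (ha : 0 < a) (hb : 0 < b) :
    ∫ p in (0 : ℝ)..1, p ^ (a - 1) * (1 - p) ^ (b - 1) = betaB a b := by
  have h := ProbabilityTheory.beta_eq_betaIntegralReal a b ha hb
  rw [betaIntegral_ofReal, intervalIntegral.integral_ofReal, Complex.ofReal_re] at h
  exact h.symm

lemma hasDerivAt_integral_beta_integrand (ha : 0 < a) (hb : 0 < b) :
    IntervalIntegrable (fun p ↦ p ^ (a - 1) * (1 - p) ^ (b - 1) * log p) volume 0 1 ∧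
      HasDerivAt (fun s ↦ ∫ p in (0 : ℝ)..1, p ^ (s - 1) * (1 - p) ^ (b - 1))
        (∫ p in (0 : ℝ)..1, p ^ (a - 1) * (1 - p) ^ (b - 1) * log p) a := by
  have ha4 : 0 < a / 4 := by positivity
  refine intervalIntegral.hasDerivAt_integral_of_dominated_loc_of_deriv_le
    (F := fun s p ↦ p ^ (s - 1) * (1 - p) ^ (b - 1))
    (F' := fun s p ↦ p ^ (s - 1) * (1 - p) ^ (b - 1) * log p)
    (bound := fun p ↦ (a / 4)⁻¹ * (p ^ (a / 4 - 1) * (1 - p) ^ (b - 1)))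
    (Metric.ball_mem_nhds a (half_pos ha)) (.of_forall fun s ↦ by fun_prop)
    (intervalIntegrable_beta_integrand ha hb) (by fun_prop) ?_
    ((intervalIntegrable_beta_integrand ha4 hb).const_mul _) ?_
  · refine ae_of_all _ fun p hp s hs ↦ ?_
    rw [uIoc_of_le zero_le_one] at hp
    have hs' : a / 4 - 1 ≤ s - 1 - a / 4 := by
      have := (abs_lt.1 (Real.dist_eq s a ▸ Metric.mem_ball.1 hs)).1
      linarith
    have hq : 0 ≤ (1 - p) ^ (b - 1) := rpow_nonneg (sub_nonneg.2 hp.2) _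
    calc ‖p ^ (s - 1) * (1 - p) ^ (b - 1) * log p‖
        = ‖p ^ (s - 1) * log p‖ * (1 - p) ^ (b - 1) := by
          rw [mul_right_comm, norm_mul, Real.norm_of_nonneg hq]
      _ ≤ (a / 4)⁻¹ * p ^ (s - 1 - a / 4) * (1 - p) ^ (b - 1) :=
          mul_le_mul_of_nonneg_right (norm_rpow_mul_log_le hp.1 hp.2 ha4) hq
      _ ≤ (a / 4)⁻¹ * (p ^ (a / 4 - 1) * (1 - p) ^ (b - 1)) := by
          rw [mul_assoc]
          exact mul_le_mul_of_nonneg_left (mul_le_mul_of_nonneg_right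
            (rpow_le_rpow_of_exponent_ge hp.1 hp.2 hs') hq) (by positivity)
  · refine ae_of_all _ fun p hp s _ ↦ ?_
    rw [uIoc_of_le zero_le_one] at hp
    have h := ((hasStrictDerivAt_const_rpow hp.1 (s - 1)).hasDerivAt.comp s
      ((hasDerivAt_id s).sub_const 1)).mul_const ((1 - p) ^ (b - 1))
    simp only [Function.comp_def, id, mul_one] at h
    exact h.congr_deriv (by ring)

lemma integral_beta_integrand_mul_log (ha : 0 < a) (hb : 0 < b) :
    ∫ p in (0 : ℝ)..1, p ^ (a - 1) * (1 - p) ^ (b - 1) * log p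
      = betaB a b * (digamma a - digamma (a + b)) := by
  have hpole : ∀ {x : ℝ}, 0 < x → ∀ m : ℕ, x ≠ -m := fun hx m ↦
    (neg_nonpos.2 m.cast_nonneg |>.trans_lt hx).ne'
  refine (hasDerivAt_integral_beta_integrand ha hb).2.unique
    ((hasDerivAt_betaB_left (hpole ha) (hpole (add_pos ha hb))).congr_of_eventuallyEq ?_)
  filter_upwards [eventually_gt_nhds ha] with s hs
  exact integral_beta_integrand hs hb

lemma intervalIntegrable_beta_integrand_mul_log_one_sub (ha : 0 < a) (hb : 0 < b) :
    IntervalIntegrable (fun p ↦ p ^ (a - 1) * (1 - p) ^ (b - 1) * log (1 - p)) volume 0 1 := by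
  have h := (hasDerivAt_integral_beta_integrand hb ha).1.comp_sub_left 1
  simp only [sub_zero, sub_self, sub_sub_cancel] at h
  exact h.symm.congr fun p _ ↦ by ring

lemma integral_beta_integrand_mul_log_one_sub (ha : 0 < a) (hb : 0 < b) :
    ∫ p in (0 : ℝ)..1, p ^ (a - 1) * (1 - p) ^ (b - 1) * log (1 - p)
      = betaB a b * (digamma b - digamma (a + b)) := by
  have h := intervalIntegral.integral_comp_sub_left
    (fun q ↦ q ^ (b - 1) * (1 - q) ^ (a - 1) * log q) (a := 0) (b := 1) 1
  simp only [sub_zero, sub_self, sub_sub_cancel] at h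
  rw [integral_beta_integrand_mul_log hb ha, betaB_comm, add_comm] at h
  rw [← h]
  exact intervalIntegral.integral_congr fun p _ ↦ by ring

end BetaIntegral

section Entropy

variable {α β : ℝ}

lemma betaB_pos (hα : 0 < α) (hβ : 0 < β) : 0 < betaB α β :=
  ProbabilityTheory.beta_pos hα hβ

lemma mul_betaDensity {p : ℝ} (hp : p ≠ 0) :
    p * betaDensity α β p = p ^ (α + 1 - 1) * (1 - p) ^ (β - 1) / betaB α β := by
  have hpow : p ^ α = p ^ (α - 1) * p := by rw [← rpow_add_one hp, sub_add_cancel]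
  rw [betaDensity, add_sub_cancel_right, hpow]
  ring

lemma log_mul_betaDensity (hα : 0 < α) (hβ : 0 < β) {p : ℝ} (hp : p ∈ Ioo (0 : ℝ) 1) :
    log (p * betaDensity α β p) = α * log p + (β - 1) * log (1 - p) - log (betaB α β) := by
  have hpα : 0 < p ^ α := rpow_pos_of_pos hp.1 α
  have hq : 0 < 1 - p := sub_pos.2 hp.2
  have hq0 : 0 < (1 - p) ^ (β - 1) := rpow_pos_of_pos hq _
  rw [mul_betaDensity hp.1.ne', add_sub_cancel_right, log_div (mul_pos hpα hq0).ne'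
    (betaB_pos hα hβ).ne', log_mul hpα.ne' hq0.ne', log_rpow hp.1, log_rpow hq]

lemma integral_mul_betaDensity_mul_log (hα : 0 < α) (hβ : 0 < β) :
    ∫ p in Icc (0 : ℝ) 1, p * betaDensity α β p * log (p * betaDensity α β p)
      = (betaB α β)⁻¹ *
        (α * (∫ p in (0 : ℝ)..1, p ^ (α + 1 - 1) * (1 - p) ^ (β - 1) * log p)
          + (β - 1) * (∫ p in (0 : ℝ)..1, p ^ (α + 1 - 1) * (1 - p) ^ (β - 1) * log (1 - p))
          - log (betaB α β) * ∫ p in (0 : ℝ)..1, p ^ (α + 1 - 1) * (1 - p) ^ (β - 1)) := by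
  have hα1 : 0 < α + 1 := by linarith
  have h0 := intervalIntegrable_beta_integrand hα1 hβ
  have hl := (hasDerivAt_integral_beta_integrand hα1 hβ).1
  have hr := intervalIntegrable_beta_integrand_mul_log_one_sub hα1 hβ
  rw [integral_Icc_eq_integral_Ioc, ← intervalIntegral.integral_of_le zero_le_one,
    ← intervalIntegral.integral_const_mul, ← intervalIntegral.integral_const_mul,
    ← intervalIntegral.integral_const_mul,
    ← intervalIntegral.integral_add (hl.const_mul _) (hr.const_mul _),
    ← intervalIntegral.integral_sub ((hl.const_mul _).add (hr.const_mul _)) (h0.const_mul _),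
    ← intervalIntegral.integral_const_mul]
  refine intervalIntegral.integral_congr_Ioo_of_le zero_le_one fun p hp ↦ ?_
  rw [log_mul_betaDensity hα hβ hp, mul_betaDensity hp.1.ne']
  ring

lemma neg_integral_mul_betaDensity_mul_log (hα : 0 < α) (hβ : 0 < β) :
    -∫ p in Icc (0 : ℝ) 1, p * betaDensity α β p * log (p * betaDensity α β p)
      = α / (α + β) *
          (log (betaB (α + 1) β) - α * digamma (α + 1) - (β - 1) * digamma β
            + (α + β - 1) * digamma (α + β + 1) - log (α / (α + β))) := by
  have hα1 : 0 < α + 1 := by linarith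
  have hB := betaB_pos hα hβ
  have hm : 0 < α / (α + β) := by positivity
  have hB1 : betaB (α + 1) β = α / (α + β) * betaB α β :=
    betaB_add_one_left hα.ne' (by positivity)
  have hlogB : log (betaB α β) = log (betaB (α + 1) β) - log (α / (α + β)) := by
    rw [hB1, log_mul hm.ne' hB.ne']
    ring
  rw [integral_mul_betaDensity_mul_log hα hβ, integral_beta_integrand_mul_log hα1 hβ,
    integral_beta_integrand_mul_log_one_sub hα1 hβ, integral_beta_integrand hα1 hβ, hlogB, hB1,
    add_right_comm α 1 β]
  field_simp
  ring

end Entropy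

theorem beta_marginalized_joint_entropy_general
    (C : ℕ) (α β : Fin C → ℝ)
    (hα : ∀ i, 0 < α i) (hβ : ∀ i, 0 < β i) :
    -∑ i, ∫ p in Set.Icc (0 : ℝ) 1,
        p * betaDensity (α i) (β i) p *
          Real.log (p * betaDensity (α i) (β i) p)
      = ∑ i, (α i / (α i + β i)) *
          (Real.log (betaB (α i + 1) (β i)) - α i * digamma (α i + 1)
            - (β i - 1) * digamma (β i)
            + (α i + β i - 1) * digamma (α i + β i + 1)
            - Real.log (α i / (α i + β i))) := by
  rw [← Finset.sum_neg_distrib]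
  exact Finset.sum_congr rfl fun i _ ↦ neg_integral_mul_betaDensity_mul_log (hα i) (hβ i)

/-- Let `C ≥ 1` and `α_i, β_i > 0`, and let
`f_i = f_{α_i,β_i}` be the `Beta(α_i,β_i)` density with mean
`m_i = α_i/(α_i+β_i)`. Then the marginalized joint entropy satisfies
`−∑ i ∫₀¹ p f_i(p) log(p f_i(p)) dp
  = ∑ i m_i·[log B(α_i+1,β_i) − α_i ψ(α_i+1) − (β_i−1)ψ(β_i)
              + (α_i+β_i−1)ψ(α_i+β_i+1) − log m_i]`. -/
theorem beta_marginalized_joint_entropy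
    (C : ℕ) (hC : 1 ≤ C) (α β : Fin C → ℝ)
    (hα : ∀ i, 0 < α i) (hβ : ∀ i, 0 < β i) :
    -∑ i, ∫ p in Set.Icc (0 : ℝ) 1,
        p * betaDensity (α i) (β i) p *
          Real.log (p * betaDensity (α i) (β i) p)
      = ∑ i, (α i / (α i + β i)) *
          (Real.log (betaB (α i + 1) (β i)) - α i * digamma (α i + 1)
            - (β i - 1) * digamma (β i)
            + (α i + β i - 1) * digamma (α i + β i + 1)
            - Real.log (α i / (α i + β i))) :=
  beta_marginalized_joint_entropy_general C α β hα hβ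
end

section
/- (Theorem 3.1, BetaMarginalBALD.) Let C ≥ 1 and α_i, β_i > 0 for i = 1,…,C, and for each i let P_i be a random variable with distribution Beta(α_i,β_i) and m_i = E[P_i] = α_i/(α_i+β_i). Then the mutual-information quantity H(Y) − E[H(Y|Φ)] = −∑_{i=1}^{C} m_i·log m_i + ∑_{i=1}^{C} E[P_i·log P_i] equals ∑_{i=1}^{C} (α_i−1)·ψ(α_i+β_i) − ∑_{i=1}^{C} (α_i/(α_i+β_i))·log(α_i/(α_i+β_i)) − ∑_{i=1}^{C} [α_i(α_i−1)/(α_i+β_i)]·ψ(α_i) − ∑_{i=1}^{C} [β_i(α_i−1)/(α_i+β_i)]·ψ(α_i+β_i+1) + ∑_{i=1}^{C} [α_i²/(α_i+β_i)]·[ψ(α_i+1) − ψ(α_i+β_i+1)], where ψ is the digamma function. -/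
open Real MeasureTheory

/-!
Differentiating the Beta integral `B(a,b) = ∫₀¹ x^(a-1) (1-x)^(b-1) dx` under the integral sign
in `a` gives `∫₀¹ x^(a-1) log x (1-x)^(b-1) dx = B(a,b) (ψ(a) - ψ(a+b))`. Applied at `a + 1`, and
with `B(a+1,b) = a/(a+b) · B(a,b)`, this yields `E[P log P] = m (ψ(a+1) - ψ(a+b+1))` for
`P ~ Beta(a,b)` with mean `m = a/(a+b)`. The stated closed form is this expression rewritten with
`ψ(x+1) = ψ(x) + 1/x`.
-/

open Set ProbabilityTheory

theorem betaB_eq_beta (a b : ℝ) : betaB a b = beta a b := rfl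

section Digamma

variable {x : ℝ}

theorem differentiableAt_Gamma_of_pos (hx : 0 < x) : DifferentiableAt ℝ Gamma x :=
  Real.differentiableAt_Gamma fun m => ((neg_nonpos.2 m.cast_nonneg).trans_lt hx).ne'

theorem hasDerivAt_log_Gamma (hx : 0 < x) :
    HasDerivAt (fun y => Real.log (Gamma y)) (deriv Gamma x / Gamma x) x :=
  (differentiableAt_Gamma_of_pos hx).hasDerivAt.log (Gamma_pos_of_pos hx).ne'

theorem digamma_eq_deriv_Gamma_div (hx : 0 < x) : digamma x = deriv Gamma x / Gamma x :=
  (hasDerivAt_log_Gamma hx).deriv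

theorem hasDerivAt_Gamma_of_pos (hx : 0 < x) : HasDerivAt Gamma (digamma x * Gamma x) x := by
  rw [digamma_eq_deriv_Gamma_div hx, div_mul_cancel₀ _ (Gamma_pos_of_pos hx).ne']
  exact (differentiableAt_Gamma_of_pos hx).hasDerivAt

theorem digamma_add_one (hx : 0 < x) : digamma (x + 1) = digamma x + 1 / x := by
  have hshift : HasDerivAt (fun y => Real.log (Gamma (y + 1))) (digamma (x + 1)) x := by
    simpa [digamma_eq_deriv_Gamma_div (by linarith : 0 < x + 1)] using
      (hasDerivAt_log_Gamma (by linarith : 0 < x + 1)).comp_add_const x 1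
  have hsum : HasDerivAt (fun y => Real.log y + Real.log (Gamma y)) (1 / x + digamma x) x := by
    rw [one_div, digamma_eq_deriv_Gamma_div hx]
    exact (hasDerivAt_log hx.ne').add (hasDerivAt_log_Gamma hx)
  have hfun : (fun y => Real.log (Gamma (y + 1)))
      =ᶠ[nhds x] fun y => Real.log y + Real.log (Gamma y) := by
    filter_upwards [eventually_gt_nhds hx] with y hy
    rw [Gamma_add_one hy.ne', Real.log_mul hy.ne' (Gamma_pos_of_pos hy).ne']
  rw [hshift.unique (hsum.congr_of_eventuallyEq hfun), add_comm]

end Digamma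

section BetaIntegral

variable {a b : ℝ}

theorem beta_add_one_left (ha : 0 < a) (hb : 0 < b) : beta (a + 1) b = a / (a + b) * beta a b := by
  have hΓ := (Gamma_pos_of_pos (add_pos ha hb)).ne'
  unfold beta
  rw [Gamma_add_one ha.ne', add_right_comm, Gamma_add_one (add_pos ha hb).ne']
  field_simp

theorem hasDerivAt_beta_left (ha : 0 < a) (hb : 0 < b) :
    HasDerivAt (fun y => beta y b) (beta a b * (digamma a - digamma (a + b))) a := by
  have hab := add_pos ha hb
  have hΓ := (Gamma_pos_of_pos hab).ne'
  have hden : HasDerivAt (fun y => Gamma (y + b)) (digamma (a + b) * Gamma (a + b)) a :=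
    (hasDerivAt_Gamma_of_pos hab).comp_add_const a b
  refine (((hasDerivAt_Gamma_of_pos ha).mul_const (Gamma b)).div hden hΓ).congr_deriv ?_
  unfold beta
  field_simp

theorem ofReal_cpow_mul_one_sub_cpow {x : ℝ} (hx : x ∈ Ioc 0 1) :
    (x : ℂ) ^ ((a : ℂ) - 1) * (1 - (x : ℂ)) ^ ((b : ℂ) - 1)
      = ((x ^ (a - 1) * (1 - x) ^ (b - 1) : ℝ) : ℂ) := by
  push_cast
  rw [Complex.ofReal_cpow hx.1.le, Complex.ofReal_cpow (sub_nonneg.2 hx.2)]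
  push_cast
  rfl

theorem integrableOn_rpow_mul_one_sub_rpow (ha : 0 < a) (hb : 0 < b) :
    IntegrableOn (fun x : ℝ => x ^ (a - 1) * (1 - x) ^ (b - 1)) (Ioc 0 1) := by
  have h := Complex.betaIntegral_convergent (u := a) (v := b) (by simpa) (by simpa)
  rw [intervalIntegrable_iff_integrableOn_Ioc_of_le zero_le_one] at h
  refine IntegrableOn.congr_fun h.re (fun x hx => ?_) measurableSet_Ioc
  simp only [ofReal_cpow_mul_one_sub_cpow hx, RCLike.re_to_complex, Complex.ofReal_re]

theorem integral_rpow_mul_one_sub_rpow (ha : 0 < a) (hb : 0 < b) :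
    ∫ x in Ioc (0 : ℝ) 1, x ^ (a - 1) * (1 - x) ^ (b - 1) = beta a b := by
  rw [beta_eq_betaIntegralReal a b ha hb, Complex.betaIntegral,
    intervalIntegral.integral_of_le zero_le_one,
    setIntegral_congr_fun measurableSet_Ioc fun x hx => ofReal_cpow_mul_one_sub_cpow hx,
    integral_complex_ofReal, Complex.ofReal_re]

theorem abs_rpow_sub_one_mul_log_le {x y : ℝ} (hx : x ∈ Ioc 0 1) (ha : 0 < a) (hy : a ≤ y) :
    |x ^ (y - 1) * Real.log x| ≤ 2 / a * x ^ (a / 2 - 1) := by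
  obtain ⟨hx0, hx1⟩ := hx
  have hlog : |Real.log x * x ^ (a / 2)| ≤ 2 / a := by
    simpa using (abs_log_mul_self_rpow_lt x (a / 2) hx0 hx1 (half_pos ha)).le
  calc |x ^ (y - 1) * Real.log x|
      = x ^ (y - 1) * |Real.log x| := by rw [abs_mul, abs_of_pos (rpow_pos_of_pos hx0 _)]
    _ ≤ x ^ (a - 1) * |Real.log x| :=
        mul_le_mul_of_nonneg_right (rpow_le_rpow_of_exponent_ge hx0 hx1 (by linarith))
          (abs_nonneg _)
    _ = x ^ (a / 2 - 1) * |Real.log x * x ^ (a / 2)| := by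
        have hsplit : x ^ (a - 1) = x ^ (a / 2 - 1) * x ^ (a / 2) := by
          rw [← rpow_add hx0]; ring_nf
        rw [abs_mul, abs_of_pos (rpow_pos_of_pos hx0 _), hsplit]
        ring
    _ ≤ 2 / a * x ^ (a / 2 - 1) := by
        rw [mul_comm]
        gcongr

theorem integral_rpow_mul_log_mul_one_sub_rpow (ha : 0 < a) (hb : 0 < b) :
    ∫ x in Ioc (0 : ℝ) 1, x ^ (a - 1) * Real.log x * (1 - x) ^ (b - 1)
      = beta a b * (digamma a - digamma (a + b)) := by
  set μ := volume.restrict (Ioc (0 : ℝ) 1)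
  set F : ℝ → ℝ → ℝ := fun y x => x ^ (y - 1) * (1 - x) ^ (b - 1)
  set F' : ℝ → ℝ → ℝ := fun y x => x ^ (y - 1) * Real.log x * (1 - x) ^ (b - 1)
  set bound : ℝ → ℝ := fun x => 4 / a * (x ^ (a / 4 - 1) * (1 - x) ^ (b - 1))
  have hmem : ∀ᵐ x ∂μ, x ∈ Ioc (0 : ℝ) 1 := ae_restrict_mem measurableSet_Ioc
  have hF_meas : ∀ y, AEStronglyMeasurable (F y) μ := fun y =>
    (by fun_prop : Measurable (F y)).aestronglyMeasurable
  have hF'_meas : AEStronglyMeasurable (F' a) μ :=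
    (((measurable_id.pow_const _).mul measurable_log).mul (by fun_prop)).aestronglyMeasurable
  have hbound_int : Integrable bound μ :=
    (integrableOn_rpow_mul_one_sub_rpow (by linarith : 0 < a / 4) hb).const_mul _
  -- `y > a/2` on the ball, so `x^(a/4)` absorbs `log x` uniformly in `y`
  have h_bound : ∀ᵐ x ∂μ, ∀ y ∈ Metric.ball a (a / 2), ‖F' y x‖ ≤ bound x := by
    filter_upwards [hmem] with x hx y hy
    have hy' : a / 2 ≤ y := by linarith [(abs_lt.mp (mem_ball_iff_norm.mp hy)).1]
    have h1x : 0 ≤ 1 - x := sub_nonneg.2 hx.2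
    calc ‖F' y x‖ = |x ^ (y - 1) * Real.log x| * (1 - x) ^ (b - 1) := by
          simp only [F', Real.norm_eq_abs, abs_mul, abs_of_nonneg (rpow_nonneg h1x _)]
      _ ≤ 2 / (a / 2) * x ^ (a / 2 / 2 - 1) * (1 - x) ^ (b - 1) :=
          mul_le_mul_of_nonneg_right
            (abs_rpow_sub_one_mul_log_le hx (half_pos ha) hy') (rpow_nonneg h1x _)
      _ = bound x := by simp only [bound]; ring_nf
  have h_diff : ∀ᵐ x ∂μ, ∀ y ∈ Metric.ball a (a / 2), HasDerivAt (F · x) (F' y x) y := by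
    filter_upwards [hmem] with x hx y _
    simpa using ((hasStrictDerivAt_const_rpow hx.1 (y - 1)).hasDerivAt.comp_sub_const y 1).mul_const
      ((1 - x) ^ (b - 1))
  have hderiv := (hasDerivAt_integral_of_dominated_loc_of_deriv_le
    (Metric.ball_mem_nhds a (half_pos ha)) (.of_forall hF_meas)
    (integrableOn_rpow_mul_one_sub_rpow ha hb) hF'_meas h_bound hbound_int h_diff).2
  have hF_eq : (fun y => ∫ x, F y x ∂μ) =ᶠ[nhds a] fun y => beta y b := by
    filter_upwards [eventually_gt_nhds ha] with y hy
    exact integral_rpow_mul_one_sub_rpow hy hb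
  exact hderiv.unique ((hasDerivAt_beta_left ha hb).congr_of_eventuallyEq hF_eq)

end BetaIntegral

theorem integral_mul_log_mul_betaDensity {a b : ℝ} (ha : 0 < a) (hb : 0 < b) :
    ∫ p in Icc (0 : ℝ) 1, p * Real.log p * betaDensity a b p
      = a / (a + b) * (digamma (a + 1) - digamma (a + b + 1)) := by
  have hdensity : ∀ p ∈ Ioc (0 : ℝ) 1, p * Real.log p * betaDensity a b p
      = p ^ (a + 1 - 1) * Real.log p * (1 - p) ^ (b - 1) / beta a b := by
    intro p hp
    have hpow : p ^ a = p * p ^ (a - 1) := by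
      rw [← rpow_one_add' hp.1.le (by linarith), add_sub_cancel]
    rw [betaDensity, betaB_eq_beta, add_sub_cancel_right, hpow]
    ring
  have := (beta_pos ha hb).ne'
  rw [integral_Icc_eq_integral_Ioc, setIntegral_congr_fun measurableSet_Ioc hdensity,
    integral_div, integral_rpow_mul_log_mul_one_sub_rpow (by linarith) hb, add_right_comm,
    beta_add_one_left ha hb]
  field_simp

theorem betaMarginalBALD_formula_general
    (C : ℕ) (α β : Fin C → ℝ)
    (hα : ∀ i, 0 < α i) (hβ : ∀ i, 0 < β i)
    (m : Fin C → ℝ) (hm : ∀ i, m i = α i / (α i + β i)) :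
    -(∑ i, m i * Real.log (m i))
      + ∑ i, ∫ p in Set.Icc (0 : ℝ) 1,
          p * Real.log p * betaDensity (α i) (β i) p
    = (∑ i, (α i - 1) * digamma (α i + β i))
      - (∑ i, (α i / (α i + β i)) * Real.log (α i / (α i + β i)))
      - (∑ i, (α i * (α i - 1) / (α i + β i)) * digamma (α i))
      - (∑ i, (β i * (α i - 1) / (α i + β i)) * digamma (α i + β i + 1))
      + ∑ i, (α i ^ 2 / (α i + β i)) *
          (digamma (α i + 1) - digamma (α i + β i + 1)) := by
  simp only [← Finset.sum_neg_distrib, ← Finset.sum_add_distrib, ← Finset.sum_sub_distrib]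
  refine Finset.sum_congr rfl fun i _ => ?_
  have hαβ := add_pos (hα i) (hβ i)
  have := (hα i).ne'
  rw [integral_mul_log_mul_betaDensity (hα i) (hβ i), hm i, digamma_add_one (hα i),
    digamma_add_one hαβ]
  field_simp
  ring

/-- **Theorem 3.1, BetaMarginalBALD.** Let `C ≥ 1` and
`α_i, β_i > 0`, and let `P_i ~ Beta(α_i,β_i)` with `m_i = α_i/(α_i+β_i)`.
Then the mutual-information quantity
`H(Y) − E[H(Y|Φ)] = −∑ i m_i log m_i + ∑ i E[P_i log P_i]` equals the
closed-form digamma expression of Theorem 3.1. -/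
theorem betaMarginalBALD_formula
    (C : ℕ) (hC : 1 ≤ C) (α β : Fin C → ℝ)
    (hα : ∀ i, 0 < α i) (hβ : ∀ i, 0 < β i)
    (m : Fin C → ℝ) (hm : ∀ i, m i = α i / (α i + β i)) :
    -(∑ i, m i * Real.log (m i))
      + ∑ i, ∫ p in Set.Icc (0 : ℝ) 1,
          p * Real.log p * betaDensity (α i) (β i) p
    = (∑ i, (α i - 1) * digamma (α i + β i))
      - (∑ i, (α i / (α i + β i)) * Real.log (α i / (α i + β i)))
      - (∑ i, (α i * (α i - 1) / (α i + β i)) * digamma (α i))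
      - (∑ i, (β i * (α i - 1) / (α i + β i)) * digamma (α i + β i + 1))
      + ∑ i, (α i ^ 2 / (α i + β i)) *
          (digamma (α i + 1) - digamma (α i + β i + 1)) :=
  betaMarginalBALD_formula_general C α β hα hβ m hm
end
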